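/- Let G be a finite simple graph with maximum degree at most 3 and let S be a nonempty subset of V(G) such that there are exactly k edges of G with one endpoint in S and the other in V(G) ∖ S, and every vertex in N_G(S) ∖ S has degree 2 or 3 in G. If at most ℓ of these k edges are incident with a vertex of N_G(S) ∖ S of degree 2 (where 0 ≤ ℓ ≤ k), then c_G(S) ≤ 4k + max{ ⌊ℓ/2⌋ + ⌊(k−ℓ)/3⌋, ⌊(ℓ−1)/2⌋ + ⌊(k−ℓ+1)/3⌋ }, where the floors are of integer (possibly negative) arguments. -/

import Mathlib

open Finset

/-- The domination number: minimum size of a dominating set. -/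
noncomputable def gamma {V : Type*} [Fintype V] (G : SimpleGraph V) : ℕ :=
  sInf {n | ∃ D : Finset V, D.card = n ∧ ∀ v : V, v ∈ D ∨ ∃ u ∈ D, G.Adj u v}

/-- The degree of a vertex. -/
noncomputable def gdeg {V : Type*} (G : SimpleGraph V) (v : V) : ℕ :=
  Nat.card (G.neighborSet v)

/-- Weight of a vertex of degree `d` (for graphs of maximum degree at most 3). -/
def wt (d : ℕ) : ℕ :=
  if d = 0 then 20 else if d = 1 then 15 else if d = 2 then 11 else 7

/-- Total weight of a graph: `w(G) = Σ_v w_G(v)`. -/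
noncomputable def wsum {V : Type*} [Fintype V] (G : SimpleGraph V) : ℕ :=
  ∑ v : V, wt (gdeg G v)

/-- The cost `c_G(S) = w_{G-S}(V∖S) - w_G(V∖S)`. -/
noncomputable def cost {V : Type*} [Fintype V] [DecidableEq V]
    (G : SimpleGraph V) (S : Finset V) : ℤ :=
  (wsum (G.induce (↑(Sᶜ) : Set V)) : ℤ) - ∑ v ∈ Sᶜ, (wt (gdeg G v) : ℤ)

/-!
Deleting `S` changes only the weights of the vertices `v ∉ S`, and the degree of such a `v`
drops by the number `j` of its neighbours in `S`. For a vertex of degree 2 or 3 the weight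
table gives an increase of at most `4 j`, plus one extra unit when `v` becomes isolated; the
`j` sum to `k`. An isolated degree-2 vertex uses up two of the at most `ℓ` boundary edges ending
at degree-2 vertices, an isolated degree-3 vertex three of the others, so there are at most
`⌊m/2⌋ + ⌊(k-m)/3⌋` extra units for some `m ≤ ℓ`, and this is maximal at `m = ℓ` or `m = ℓ - 1`.
-/

lemma wt_sub_sub_wt_le (d j : ℕ) (hd : d ≤ 3) (hj : j ≤ d) (h2 : j ≠ 0 → d = 2 ∨ d = 3) :
    (wt (d - j) : ℤ) - wt d ≤
      4 * j + (if d = 2 ∧ j = 2 then 1 else 0) + (if d = 3 ∧ j = 3 then 1 else 0) := by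
  interval_cases d <;> interval_cases j <;> simp_all [wt]

lemma mul_card_filter_eq_le_sum {ι : Type*} (s : Finset ι) (f : ι → ℕ) (c : ℕ) :
    c * #{i ∈ s | f i = c} ≤ ∑ i ∈ s, f i := by
  calc c * #{i ∈ s | f i = c} = ∑ i ∈ s with f i = c, f i := by
        rw [sum_congr rfl fun i hi => (mem_filter.mp hi).2, sum_const, smul_eq_mul, mul_comm]
    _ ≤ ∑ i ∈ s, f i := sum_le_sum_of_subset (filter_subset _ _)

-- `x ↦ ⌊x/2⌋ + ⌊(k-x)/3⌋` does not decrease under `x ↦ x + 2`.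
lemma add_le_max_fdiv {a b m l k : ℕ} (hml : m ≤ l) (ha : 2 * a ≤ m) (hb : 3 * b + m ≤ k) :
    (a + b : ℤ) ≤ max (Int.fdiv (l : ℤ) 2 + Int.fdiv ((k : ℤ) - l) 3)
      (Int.fdiv ((l : ℤ) - 1) 2 + Int.fdiv ((k : ℤ) - l + 1) 3) := by
  simp only [Int.fdiv_eq_ediv_of_nonneg _ (by norm_num : (0 : ℤ) ≤ 2),
    Int.fdiv_eq_ediv_of_nonneg _ (by norm_num : (0 : ℤ) ≤ 3), le_max_iff]
  omega

def degreeIn {V : Type*} (G : SimpleGraph V) [DecidableRel G.Adj] (S : Finset V) (v : V) : ℕ :=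
  #{u ∈ S | G.Adj u v}

section CostOfDeletion

variable {V : Type*} [Fintype V] (G : SimpleGraph V) [DecidableRel G.Adj]

lemma gdeg_eq_degree (v : V) : gdeg G v = G.degree v := by
  rw [gdeg, Nat.card_eq_fintype_card, G.card_neighborSet_eq_degree]

lemma gdeg_induce (s : Set V) [DecidablePred (· ∈ s)] (x : s) :
    gdeg (G.induce s) x = #{u | u ∈ s ∧ G.Adj x u} := by
  have e : (G.induce s).neighborSet x ≃ {u // u ∈ s ∧ G.Adj x u} :=
    Equiv.subtypeSubtypeEquivSubtypeInter (· ∈ s) (G.Adj x)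
  rw [gdeg, Nat.card_congr e, Nat.card_eq_fintype_card, Fintype.card_subtype]

variable [DecidableEq V]

lemma degreeIn_add_card_adj_notMem (S : Finset V) (v : V) :
    degreeIn G S v + #{u | u ∉ S ∧ G.Adj v u} = gdeg G v := by
  rw [gdeg_eq_degree, ← G.card_neighborFinset_eq_degree,
    ← card_filter_add_card_filter_not (s := G.neighborFinset v) (p := (· ∈ S)), degreeIn]
  congr 1 <;> congr 1 <;> ext u <;> simp [G.adj_comm, and_comm]

lemma gdeg_induce_compl (S : Finset V) (x : ((Sᶜ : Finset V) : Set V)) :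
    gdeg (G.induce ↑Sᶜ) x = gdeg G x - degreeIn G S x := by
  rw [gdeg_induce, ← degreeIn_add_card_adj_notMem G S x, Nat.add_sub_cancel_left]
  simp

lemma cost_eq_sum (S : Finset V) :
    cost G S = ∑ v ∈ Sᶜ, ((wt (gdeg G v - degreeIn G S v) : ℤ) - wt (gdeg G v)) := by
  rw [cost, wsum, sum_sub_distrib, ← sum_finset_coe (s := Sᶜ)
    (f := fun v => (wt (gdeg G v - degreeIn G S v) : ℤ))]
  simp only [gdeg_induce_compl, Nat.cast_sum]

lemma natCard_boundaryEdges_eq_sum_filter (S : Finset V) (Q : V → Prop) [DecidablePred Q] :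
    Nat.card {e : Sym2 V // e ∈ G.edgeSet ∧ ∃ a b, a ∈ S ∧ b ∉ S ∧ Q b ∧ e = s(a, b)} =
      ∑ v ∈ Sᶜ with Q v, degreeIn G S v := by
  rw [Nat.card_eq_fintype_card, Fintype.card_subtype]
  simp only [degreeIn]
  rw [← card_sigma]
  symm
  apply card_bij (fun p _ => s(p.2, p.1))
  · rintro ⟨v, u⟩ hp
    simp only [mem_sigma, mem_filter, mem_compl] at hp
    simp only [mem_filter, mem_univ, true_and, SimpleGraph.mem_edgeSet]
    exact ⟨hp.2.2, u, v, hp.2.1, hp.1.1, hp.1.2, rfl⟩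
  · rintro ⟨v, u⟩ hp ⟨v', u'⟩ hp' h
    simp only [mem_sigma, mem_filter, mem_compl] at hp hp'
    rcases Sym2.eq_iff.mp h with ⟨rfl, rfl⟩ | ⟨rfl, rfl⟩
    · rfl
    · exact absurd hp.2.1 hp'.1.1
  · rintro e he
    simp only [mem_filter, mem_univ, true_and] at he
    obtain ⟨hadj, u, v, hu, hv, hQ, rfl⟩ := he
    exact ⟨⟨v, u⟩, by simpa [hu, hv, hQ] using hadj, rfl⟩

lemma natCard_boundaryEdges_eq_sum (S : Finset V) :
    Nat.card {e : Sym2 V // e ∈ G.edgeSet ∧ ∃ a b, a ∈ S ∧ b ∉ S ∧ e = s(a, b)} =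
      ∑ v ∈ Sᶜ, degreeIn G S v := by
  simpa using natCard_boundaryEdges_eq_sum_filter G S fun _ => True

lemma cost_le_four_mul_sum_add_card_isolated (S : Finset V) (hdeg : ∀ v, gdeg G v ≤ 3)
    (hN : ∀ v, v ∉ S → (∃ u ∈ S, G.Adj u v) → gdeg G v = 2 ∨ gdeg G v = 3) :
    cost G S ≤ 4 * ∑ v ∈ Sᶜ, (degreeIn G S v : ℤ) +
      #{v ∈ Sᶜ | gdeg G v = 2 ∧ degreeIn G S v = 2} +
      #{v ∈ Sᶜ | gdeg G v = 3 ∧ degreeIn G S v = 3} := by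
  have hle (v : V) : degreeIn G S v ≤ gdeg G v :=
    Nat.le.intro (degreeIn_add_card_adj_notMem G S v)
  have hnbr {v : V} (hv : degreeIn G S v ≠ 0) : ∃ u ∈ S, G.Adj u v := by
    obtain ⟨u, hu⟩ := card_ne_zero.mp hv
    exact ⟨u, mem_filter.mp hu⟩
  rw [cost_eq_sum]
  calc _ ≤ ∑ v ∈ Sᶜ, (4 * (degreeIn G S v : ℤ) +
          (if gdeg G v = 2 ∧ degreeIn G S v = 2 then 1 else 0) +
          (if gdeg G v = 3 ∧ degreeIn G S v = 3 then 1 else 0)) :=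
        sum_le_sum fun v hv =>
          wt_sub_sub_wt_le _ _ (hdeg v) (hle v) fun h => hN v (mem_compl.mp hv) (hnbr h)
    _ = _ := by rw [sum_add_distrib, sum_add_distrib, ← mul_sum, sum_boole, sum_boole]

end CostOfDeletion

theorem cost_bound_precise_general {V : Type*} [Fintype V] [DecidableEq V] (G : SimpleGraph V)
    (hdeg : ∀ v : V, gdeg G v ≤ 3)
    (S : Finset V) (k ℓ : ℕ)
    (hk : Nat.card {e : Sym2 V // e ∈ G.edgeSet ∧ ∃ a b, a ∈ S ∧ b ∉ S ∧ e = s(a, b)} = k)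
    (hN : ∀ v : V, v ∉ S → (∃ u ∈ S, G.Adj u v) → gdeg G v = 2 ∨ gdeg G v = 3)
    (hℓ : Nat.card {e : Sym2 V // e ∈ G.edgeSet ∧
        ∃ a b, a ∈ S ∧ b ∉ S ∧ gdeg G b = 2 ∧ e = s(a, b)} ≤ ℓ) :
    cost G S ≤ 4 * (k : ℤ) +
      max (Int.fdiv (ℓ : ℤ) 2 + Int.fdiv ((k : ℤ) - ℓ) 3)
          (Int.fdiv ((ℓ : ℤ) - 1) 2 + Int.fdiv ((k : ℤ) - ℓ + 1) 3) := by
  classical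
  rw [natCard_boundaryEdges_eq_sum] at hk
  rw [natCard_boundaryEdges_eq_sum_filter] at hℓ
  have ha := mul_card_filter_eq_le_sum {v ∈ Sᶜ | gdeg G v = 2} (degreeIn G S) 2
  rw [filter_filter] at ha
  have hb : 3 * #{v ∈ Sᶜ | gdeg G v = 3 ∧ degreeIn G S v = 3} +
      ∑ v ∈ Sᶜ with gdeg G v = 2, degreeIn G S v ≤ k := by
    rw [← hk, ← sum_filter_not_add_sum_filter Sᶜ (gdeg G · = 2), ← filter_filter]
    refine Nat.add_le_add_right ((mul_card_filter_eq_le_sum _ _ 3).trans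
      (sum_le_sum_of_subset ?_)) _
    exact monotone_filter_right Sᶜ fun v _ (h : gdeg G v = 3) => by omega
  have hcost := cost_le_four_mul_sum_add_card_isolated G S hdeg hN
  push_cast [← Nat.cast_sum, hk] at hcost
  linarith [add_le_max_fdiv hℓ ha hb]

theorem cost_bound_precise {V : Type*} [Fintype V] [DecidableEq V] (G : SimpleGraph V)
    (hdeg : ∀ v : V, gdeg G v ≤ 3)
    (S : Finset V) (hS : S.Nonempty) (k ℓ : ℕ) (hℓk : ℓ ≤ k)
    (hk : Nat.card {e : Sym2 V // e ∈ G.edgeSet ∧ ∃ a b, a ∈ S ∧ b ∉ S ∧ e = s(a, b)} = k)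
    (hN : ∀ v : V, v ∉ S → (∃ u ∈ S, G.Adj u v) → gdeg G v = 2 ∨ gdeg G v = 3)
    (hℓ : Nat.card {e : Sym2 V // e ∈ G.edgeSet ∧
        ∃ a b, a ∈ S ∧ b ∉ S ∧ gdeg G b = 2 ∧ e = s(a, b)} ≤ ℓ) :
    cost G S ≤ 4 * (k : ℤ) +
      max (Int.fdiv (ℓ : ℤ) 2 + Int.fdiv ((k : ℤ) - ℓ) 3)
          (Int.fdiv ((ℓ : ℤ) - 1) 2 + Int.fdiv ((k : ℤ) - ℓ + 1) 3) :=
  cost_bound_precise_general G hdeg S k ℓ hk hN hℓ
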